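/- Let u : ℝⁿ → ℝ be Lipschitz with constant L, let γ ∈ (0,1), C₀ > 0, and for each point z in a set S ⊆ ℝⁿ let H_z : ℝⁿ → ℝ be a function such that for all r ∈ (0, 1]: sup_{x ∈ B₁} | u(z + rx)/r − H_z(x) | ≤ C₀·r^γ. Then for all x₀, y₀ ∈ S with 0 < |x₀ − y₀| ≤ 1: sup_{x ∈ B₁} | H_{x₀}(x) − H_{y₀}(x) | ≤ (L + 2C₀)·|x₀ − y₀|^{γ/(1+γ)}. -/

import Mathlib

/-!
At scale `r` the rescalings of `u` at `x₀` and `y₀` differ by at most `L|x₀ − y₀|/r`, while each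
is within `C₀ r^γ` of its blow-up limit. Balancing the two errors with `r = |x₀ − y₀|^{1/(1+γ)}`
makes both of order `|x₀ − y₀|^{γ/(1+γ)}`.
-/

open Real

theorem abs_sub_le_add_two_mul_of_near {a b p q δ ε : ℝ} (hpq : |p - q| ≤ δ)
    (ha : |p - a| ≤ ε) (hb : |q - b| ≤ ε) : |a - b| ≤ δ + 2 * ε := by
  have hap : |a - p| ≤ ε := abs_sub_comm a p ▸ ha
  calc |a - b| ≤ |a - p| + |p - q| + |q - b| := by
        linarith [abs_sub_le a p b, abs_sub_le p q b]
    _ ≤ δ + 2 * ε := by linarith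

theorem abs_div_sub_div_rescale_le {E : Type*} [SeminormedAddCommGroup E] [Module ℝ E]
    {u : E → ℝ} {L : ℝ} (hlip : ∀ x y : E, |u x - u y| ≤ L * ‖x - y‖)
    (z w x : E) {r : ℝ} (hr : 0 < r) :
    |u (z + r • x) / r - u (w + r • x) / r| ≤ L * ‖z - w‖ / r := by
  rw [div_sub_div_same, abs_div, abs_of_pos hr]
  gcongr
  simpa only [add_sub_add_right_eq_sub] using hlip (z + r • x) (w + r • x)

theorem rpow_one_div_one_add_rpow {d : ℝ} (hd : 0 ≤ d) (γ : ℝ) :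
    (d ^ (1 / (1 + γ))) ^ γ = d ^ (γ / (1 + γ)) := by
  rw [← rpow_mul hd, one_div_mul_eq_div]

theorem div_rpow_one_div_one_add {d γ : ℝ} (hd : 0 < d) (hγ : 1 + γ ≠ 0) :
    d / d ^ (1 / (1 + γ)) = d ^ (γ / (1 + γ)) := by
  rw [show d / d ^ (1 / (1 + γ)) = d ^ (1 - 1 / (1 + γ)) by rw [rpow_sub hd, rpow_one]]
  congr 1
  field_simp
  ring

theorem stmt13_general (n : ℕ) (u : EuclideanSpace ℝ (Fin n) → ℝ) (L γ C₀ : ℝ)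
    (hγ₀ : 0 < γ)
    (hlip : ∀ x y : EuclideanSpace ℝ (Fin n), |u x - u y| ≤ L * ‖x - y‖)
    (S : Set (EuclideanSpace ℝ (Fin n)))
    (H : EuclideanSpace ℝ (Fin n) → EuclideanSpace ℝ (Fin n) → ℝ)
    (h : ∀ z ∈ S, ∀ r : ℝ, 0 < r → r ≤ 1 → ∀ x : EuclideanSpace ℝ (Fin n), ‖x‖ < 1 →
      |u (z + r • x) / r - H z x| ≤ C₀ * r ^ γ) :
    ∀ x₀ ∈ S, ∀ y₀ ∈ S, 0 < ‖x₀ - y₀‖ → ‖x₀ - y₀‖ ≤ 1 →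
      ∀ x : EuclideanSpace ℝ (Fin n), ‖x‖ < 1 →
        |H x₀ x - H y₀ x| ≤ (L + 2 * C₀) * ‖x₀ - y₀‖ ^ (γ / (1 + γ)) := by
  intro x₀ hx₀ y₀ hy₀ hd hd₁ x hx
  set d := ‖x₀ - y₀‖
  have hγ : 0 < 1 + γ := by linarith
  set r := d ^ (1 / (1 + γ))
  have hr₀ : 0 < r := rpow_pos_of_pos hd _
  have hr₁ : r ≤ 1 := rpow_le_one hd.le hd₁ (by positivity)
  calc |H x₀ x - H y₀ x| ≤ L * d / r + 2 * (C₀ * r ^ γ) :=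
        abs_sub_le_add_two_mul_of_near (abs_div_sub_div_rescale_le hlip x₀ y₀ x hr₀)
          (h x₀ hx₀ r hr₀ hr₁ x hx) (h y₀ hy₀ r hr₀ hr₁ x hx)
    _ = (L + 2 * C₀) * d ^ (γ / (1 + γ)) := by
        rw [mul_div_assoc, div_rpow_one_div_one_add hd hγ.ne', rpow_one_div_one_add_rpow hd.le]
        ring

/-- Hölder continuity of the blow-up limits (Lemma 5.1): if `u` is `L`-Lipschitz and
for each `z ∈ S` a function `H_z` satisfies `sup_{B₁}|u(z+rx)/r − H_z(x)| ≤ C₀ r^γ`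
for all `0 < r ≤ 1`, then for `x₀, y₀ ∈ S` with `0 < |x₀−y₀| ≤ 1`,
`sup_{B₁}|H_{x₀} − H_{y₀}| ≤ (L + 2C₀)|x₀−y₀|^{γ/(1+γ)}`. -/
theorem stmt13 (n : ℕ) (u : EuclideanSpace ℝ (Fin n) → ℝ) (L γ C₀ : ℝ)
    (hL : 0 < L) (hγ₀ : 0 < γ) (hγ₁ : γ < 1) (hC₀ : 0 < C₀)
    (hlip : ∀ x y : EuclideanSpace ℝ (Fin n), |u x - u y| ≤ L * ‖x - y‖)
    (S : Set (EuclideanSpace ℝ (Fin n)))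
    (H : EuclideanSpace ℝ (Fin n) → EuclideanSpace ℝ (Fin n) → ℝ)
    (h : ∀ z ∈ S, ∀ r : ℝ, 0 < r → r ≤ 1 → ∀ x : EuclideanSpace ℝ (Fin n), ‖x‖ < 1 →
      |u (z + r • x) / r - H z x| ≤ C₀ * r ^ γ) :
    ∀ x₀ ∈ S, ∀ y₀ ∈ S, 0 < ‖x₀ - y₀‖ → ‖x₀ - y₀‖ ≤ 1 →
      ∀ x : EuclideanSpace ℝ (Fin n), ‖x‖ < 1 →
        |H x₀ x - H y₀ x| ≤ (L + 2 * C₀) * ‖x₀ - y₀‖ ^ (γ / (1 + γ)) :=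
  stmt13_general n u L γ C₀ hγ₀ hlip S H h
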